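/- Unrestricted cross reductions need not terminate: in λ_CL without the communication complexity restriction, the term (λy^B. ā y) ∥_a (x^{B→¬B} a) admits an infinite reduction sequence, reducing via cross reductions to terms of the same shape with fresh channels forever. -/

import Mathlib

/-- Propositional formulas: atoms, ⊥, implication, conjunction. -/
inductive Formula : Type where
  | atom : Nat → Formula
  | bot  : Formula
  | imp  : Formula → Formula → Formula
  | conj : Formula → Formula → Formula
deriving DecidableEq

/-- A formula is prime if it is not a conjunction. -/
def Formula.IsPrime : Formula → Prop
  | .conj _ _ => False
  | _ => True

/-- Atomic formulas (atoms and ⊥). -/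
def Formula.IsAtomic : Formula → Prop
  | .atom _ => True
  | .bot => True
  | _ => False

/-- Subformula relation. -/
inductive Subformula : Formula → Formula → Prop where
  | refl (A : Formula) : Subformula A A
  | impL : Subformula A B → Subformula A (Formula.imp B C)
  | impR : Subformula A C → Subformula A (Formula.imp B C)
  | conjL : Subformula A B → Subformula A (Formula.conj B C)
  | conjR : Subformula A C → Subformula A (Formula.conj B C)

/-- Proper subformula: subformula and not equal. -/
def ProperSub (A B : Formula) : Prop := Subformula A B ∧ A ≠ B

/-- B is a strong subformula of A: a proper subformula of some prime
proper subformula of A. -/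
def StrongSub (B A : Formula) : Prop :=
  ∃ P, Formula.IsPrime P ∧ ProperSub P A ∧ ProperSub B P

/-- `ConjList A l` : A is the conjunction of the (nonempty) list of formulas l. -/
inductive ConjList : Formula → List Formula → Prop where
  | single (A : Formula) : ConjList A [A]
  | conj : ConjList A l → ConjList B m → ConjList (Formula.conj A B) (l ++ m)

/-- P is a prime factor of A: A is a conjunction of prime formulas among which P. -/
def PrimeFactor (P A : Formula) : Prop :=
  ∃ l, ConjList A l ∧ (∀ Q ∈ l, Formula.IsPrime Q) ∧ P ∈ l

/-- Number of symbols of a formula. -/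
def Formula.size : Formula → Nat
  | .atom _ => 1
  | .bot => 1
  | .imp A B => A.size + B.size + 1
  | .conj A B => A.size + B.size + 1

/-- The canonical list of prime factors of a formula. -/
def primeFactors : Formula → List Formula
  | .conj A B => primeFactors A ++ primeFactors B
  | A => [A]
/-- λ_CL terms (de Bruijn): simply typed λ-terms plus the parallel operators
`parC A u v` (u ∥ₐ v with communication kind A, binding channel variable 0,
of type ¬A in u and A in v) and `par u v` (u ∥ v). -/
inductive TermCL : Type where
  | var : Nat → TermCL
  | lam : Formula → TermCL → TermCL
  | app : TermCL → TermCL → TermCL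
  | pair : TermCL → TermCL → TermCL
  | proj : Bool → TermCL → TermCL
  | efq : Formula → TermCL → TermCL
  | parC : Formula → TermCL → TermCL → TermCL
  | par : TermCL → TermCL → TermCL
deriving DecidableEq

def liftF (f : Nat → Nat) : Nat → Nat
  | 0 => 0
  | n+1 => f n + 1

def TermCL.rename (f : Nat → Nat) : TermCL → TermCL
  | .var n => .var (f n)
  | .lam A t => .lam A (t.rename (liftF f))
  | .app t u => .app (t.rename f) (u.rename f)
  | .pair t u => .pair (t.rename f) (u.rename f)
  | .proj b t => .proj b (t.rename f)
  | .efq A t => .efq A (t.rename f)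
  | .parC A u v => .parC A (u.rename (liftF f)) (v.rename (liftF f))
  | .par u v => .par (u.rename f) (v.rename f)

/-- Shift all free variables up by one. -/
def liftT : TermCL → TermCL := TermCL.rename Nat.succ
/-- Shift all free variables except 0 up by one. -/
def liftU1 : TermCL → TermCL := TermCL.rename (liftF Nat.succ)
/-- Swap the variables 0 and 1. -/
def swap01 : TermCL → TermCL :=
  TermCL.rename (fun n => match n with | 0 => 1 | 1 => 0 | m => m)

/-- Substitution of `s` for variable `k` (variables above `k` shift down). -/
def TermCL.subst (k : Nat) (s : TermCL) : TermCL → TermCL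
  | .var n => if n = k then s else if k < n then .var (n-1) else .var n
  | .lam A t => .lam A (TermCL.subst (k+1) (s.rename Nat.succ) t)
  | .app t u => .app (TermCL.subst k s t) (TermCL.subst k s u)
  | .pair t u => .pair (TermCL.subst k s t) (TermCL.subst k s u)
  | .proj b t => .proj b (TermCL.subst k s t)
  | .efq A t => .efq A (TermCL.subst k s t)
  | .parC A u v => .parC A (TermCL.subst (k+1) (s.rename Nat.succ) u)
      (TermCL.subst (k+1) (s.rename Nat.succ) v)
  | .par u v => .par (TermCL.subst k s u) (TermCL.subst k s v)

def liftσ (σ : Nat → TermCL) : Nat → TermCL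
  | 0 => .var 0
  | n+1 => (σ n).rename Nat.succ

/-- Simultaneous substitution. -/
def TermCL.msubst (σ : Nat → TermCL) : TermCL → TermCL
  | .var n => σ n
  | .lam A t => .lam A (TermCL.msubst (liftσ σ) t)
  | .app t u => .app (TermCL.msubst σ t) (TermCL.msubst σ u)
  | .pair t u => .pair (TermCL.msubst σ t) (TermCL.msubst σ u)
  | .proj b t => .proj b (TermCL.msubst σ t)
  | .efq A t => .efq A (TermCL.msubst σ t)
  | .parC A u v => .parC A (TermCL.msubst (liftσ σ) u) (TermCL.msubst (liftσ σ) v)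
  | .par u v => .par (TermCL.msubst σ u) (TermCL.msubst σ v)

/-- `freeInB n t = true` iff variable `n` occurs free in `t`. -/
def freeInB (n : Nat) : TermCL → Bool
  | .var m => m == n
  | .lam _ t => freeInB (n+1) t
  | .app t u => freeInB n t || freeInB n u
  | .pair t u => freeInB n t || freeInB n u
  | .proj _ t => freeInB n t
  | .efq _ t => freeInB n t
  | .parC _ u v => freeInB (n+1) u || freeInB (n+1) v
  | .par u v => freeInB n u || freeInB n v

/-- Typing for λ_CL: intuitionistic rules, the excluded-middle rule (parC)
and contraction (par). -/
inductive TypingCL : List Formula → TermCL → Formula → Prop where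
  | var : Γ[n]? = some A → TypingCL Γ (.var n) A
  | lam : TypingCL (A::Γ) t B → TypingCL Γ (.lam A t) (.imp A B)
  | app : TypingCL Γ t (.imp A B) → TypingCL Γ u A → TypingCL Γ (.app t u) B
  | pair : TypingCL Γ t A → TypingCL Γ u B → TypingCL Γ (.pair t u) (.conj A B)
  | projL : TypingCL Γ t (.conj A B) → TypingCL Γ (.proj false t) A
  | projR : TypingCL Γ t (.conj A B) → TypingCL Γ (.proj true t) B
  | efq : P.IsAtomic → P ≠ .bot → TypingCL Γ t .bot → TypingCL Γ (.efq P t) P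
  | parC : TypingCL (.imp A .bot :: Γ) u C → TypingCL (A :: Γ) v C →
      TypingCL Γ (.parC A u v) C
  | par : TypingCL Γ u A → TypingCL Γ v A → TypingCL Γ (.par u v) A

/-- Terms without parallel operators, i.e. simply typed λ-terms. -/
def NoPar : TermCL → Prop
  | .var _ => True
  | .lam _ t => NoPar t
  | .app t u => NoPar t ∧ NoPar u
  | .pair t u => NoPar t ∧ NoPar u
  | .proj _ t => NoPar t
  | .efq _ t => NoPar t
  | .parC _ _ _ => False
  | .par _ _ => False

/-- Simple parallel terms: parallel compositions (by ∥) of simply typed λ-terms. -/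
inductive SimpleParallel : TermCL → Prop where
  | base : NoPar t → SimpleParallel t
  | par : SimpleParallel u → SimpleParallel v → SimpleParallel (.par u v)

/-- Parallel forms: parallel compositions (by ∥ₐ and ∥) of simply typed λ-terms. -/
inductive ParallelForm : TermCL → Prop where
  | base : NoPar t → ParallelForm t
  | parC : ParallelForm u → ParallelForm v → ParallelForm (.parC A u v)
  | par : ParallelForm u → ParallelForm v → ParallelForm (.par u v)

/-- One-hole contexts. -/
inductive Ctx : Type where
  | hole : Ctx
  | lam : Formula → Ctx → Ctx
  | appL : Ctx → TermCL → Ctx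
  | appR : TermCL → Ctx → Ctx
  | pairL : Ctx → TermCL → Ctx
  | pairR : TermCL → Ctx → Ctx
  | proj : Bool → Ctx → Ctx
  | efq : Formula → Ctx → Ctx
  | parCL : Formula → Ctx → TermCL → Ctx
  | parCR : Formula → TermCL → Ctx → Ctx
  | parL : Ctx → TermCL → Ctx
  | parR : TermCL → Ctx → Ctx

def Ctx.fill : Ctx → TermCL → TermCL
  | .hole, t => t
  | .lam A c, t => .lam A (c.fill t)
  | .appL c u, t => .app (c.fill t) u
  | .appR u c, t => .app u (c.fill t)
  | .pairL c u, t => .pair (c.fill t) u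
  | .pairR u c, t => .pair u (c.fill t)
  | .proj b c, t => .proj b (c.fill t)
  | .efq A c, t => .efq A (c.fill t)
  | .parCL A c u, t => .parC A (c.fill t) u
  | .parCR A u c, t => .parC A u (c.fill t)
  | .parL c u, t => .par (c.fill t) u
  | .parR u c, t => .par u (c.fill t)

/-- Types of the binders crossed by the hole, innermost first. -/
def Ctx.ext : Ctx → List Formula
  | .hole => []
  | .lam A c => c.ext ++ [A]
  | .appL c _ => c.ext
  | .appR _ c => c.ext
  | .pairL c _ => c.ext
  | .pairR _ c => c.ext
  | .proj _ c => c.ext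
  | .efq _ c => c.ext
  | .parCL A c _ => c.ext ++ [Formula.imp A .bot]
  | .parCR A _ c => c.ext ++ [A]
  | .parL c _ => c.ext
  | .parR _ c => c.ext

/-- Number of binders above the hole. -/
def Ctx.depth (c : Ctx) : Nat := c.ext.length

def Ctx.rename (f : Nat → Nat) : Ctx → Ctx
  | .hole => .hole
  | .lam A c => .lam A (c.rename (liftF f))
  | .appL c u => .appL (c.rename f) (u.rename f)
  | .appR u c => .appR (u.rename f) (c.rename f)
  | .pairL c u => .pairL (c.rename f) (u.rename f)
  | .pairR u c => .pairR (u.rename f) (c.rename f)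
  | .proj b c => .proj b (c.rename f)
  | .efq A c => .efq A (c.rename f)
  | .parCL A c u => .parCL A (c.rename (liftF f)) (u.rename (liftF f))
  | .parCR A u c => .parCR A (u.rename (liftF f)) (c.rename (liftF f))
  | .parL c u => .parL (c.rename f) (u.rename f)
  | .parR u c => .parR (u.rename f) (c.rename f)

/-- The variable `a` does not occur (free) to the right of the hole. -/
def NoVarRight (a : Nat) : Ctx → Prop
  | .hole => True
  | .lam _ c => NoVarRight (a+1) c
  | .appL c t => NoVarRight a c ∧ freeInB a t = false
  | .appR _ c => NoVarRight a c
  | .pairL c t => NoVarRight a c ∧ freeInB a t = false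
  | .pairR _ c => NoVarRight a c
  | .proj _ c => NoVarRight a c
  | .efq _ c => NoVarRight a c
  | .parCL _ c t => NoVarRight (a+1) c ∧ freeInB (a+1) t = false
  | .parCR _ _ c => NoVarRight (a+1) c
  | .parL c t => NoVarRight a c ∧ freeInB a t = false
  | .parR _ c => NoVarRight a c

open Classical in
/-- Communication complexity: total number of symbols of the prime factors of
the communication kind `B` that are neither proper subformulas of the term's
type `A` nor strong subformulas of the types `fvs` of its free variables. -/
noncomputable def commComplexity (fvs : List Formula) (A B : Formula) : Nat :=
  ((primeFactors B).filter fun P =>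
      decide (¬ (ProperSub P A ∨ ∃ Ai ∈ fvs, StrongSub P Ai))).foldr
    (fun P n => P.size + n) 0

/-- The types of the free variables of `t` in context `Γ`. -/
def freeTypes (Γ : List Formula) (t : TermCL) : List Formula :=
  (List.range Γ.length).filterMap fun n => if freeInB n t then Γ[n]? else none

/-- Iterated pairs ⟨t₁,...,tₙ⟩. -/
def tupleTerm : List TermCL → TermCL
  | [] => .var 0
  | [t] => t
  | t :: l => .pair t (tupleTerm l)

/-- Iterated conjunctions Y₁ ∧ (Y₂ ∧ ... ∧ Yₙ). -/
def tupleType : List Formula → Formula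
  | [] => .bot
  | [A] => A
  | A :: l => .conj A (tupleType l)

/-- The i-th projection of a tuple of length `len`. -/
def projSel (i len : Nat) (t : TermCL) : TermCL :=
  if i + 1 = len then (TermCL.proj true)^[i] t
  else .proj false ((TermCL.proj true)^[i] t)

/-- The multiple substitution `u^{b/ȳ}` (with `b` the channel variable 0):
variables in `ys` (the free variables of `u` bound in the context, all < k)
are replaced by the corresponding projections of `b`, the remaining free
variables (≥ k+1, the variable k being the channel ā, absent) are readdressed. -/
def crossσ (k : Nat) (ys : List Nat) : Nat → TermCL := fun n =>
  if n < k then projSel (List.idxOf n ys) ys.length (.var 0)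
  else .var (n - k)

/-- Intuitionistic (β/projection) reduction on λ_CL terms. -/
inductive RedI : TermCL → TermCL → Prop where
  | beta : RedI (.app (.lam A t) u) (TermCL.subst 0 u t)
  | projL : RedI (.proj false (.pair t u)) t
  | projR : RedI (.proj true (.pair t u)) u
  | lam : RedI t t' → RedI (.lam A t) (.lam A t')
  | appL : RedI t t' → RedI (.app t u) (.app t' u)
  | appR : RedI u u' → RedI (.app t u) (.app t u')
  | pairL : RedI t t' → RedI (.pair t u) (.pair t' u)
  | pairR : RedI u u' → RedI (.pair t u) (.pair t u')
  | proj : RedI t t' → RedI (.proj b t) (.proj b t')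
  | efq : RedI t t' → RedI (.efq A t) (.efq A t')
  | parCL : RedI u u' → RedI (.parC A u v) (.parC A u' v)
  | parCR : RedI v v' → RedI (.parC A u v) (.parC A u v')
  | parL : RedI u u' → RedI (.par u v) (.par u' v)
  | parR : RedI v v' → RedI (.par u v) (.par u v')

/-- Normality with respect to intuitionistic reductions. -/
def IntuNormal (t : TermCL) : Prop := ∀ u, ¬ RedI t u
/-- The reduction relation of λ_CL *without* the communication-complexity
restrictions: intuitionistic reductions, permutations, (unrestricted) basic
cross reductions, cross reductions and simplifications, closed under all term
constructors. -/
inductive RedU : TermCL → TermCL → Prop where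
  | beta : RedU (.app (.lam X t) u) (TermCL.subst 0 u t)
  | projL : RedU (.proj false (.pair t u)) t
  | projR : RedU (.proj true (.pair t u)) u
  | appParC : RedU (.app w (.parC X u v))
      (.parC X (.app (liftT w) u) (.app (liftT w) v))
  | parCApp : RedU (.app (.parC X u v) w)
      (.parC X (.app u (liftT w)) (.app v (liftT w)))
  | parCProj : RedU (.proj b (.parC X u v)) (.parC X (.proj b u) (.proj b v))
  | parCEfq : RedU (.efq P (.parC X u v)) (.parC X (.efq P u) (.efq P v))
  | lamParC : RedU (.lam Y (.parC X u v))
      (.parC X (.lam Y (swap01 u)) (.lam Y (swap01 v)))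
  | pairParCL : RedU (.pair (.parC X u v) w)
      (.parC X (.pair u (liftT w)) (.pair v (liftT w)))
  | pairParCR : RedU (.pair w (.parC X u v))
      (.parC X (.pair (liftT w) u) (.pair (liftT w) v))
  | appPar : RedU (.app w (.par u v)) (.par (.app w u) (.app w v))
  | parApp : RedU (.app (.par u v) w) (.par (.app u w) (.app v w))
  | parProj : RedU (.proj b (.par u v)) (.par (.proj b u) (.proj b v))
  | parEfq : RedU (.efq P (.par u v)) (.par (.efq P u) (.efq P v))
  | lamPar : RedU (.lam Y (.par u v)) (.par (.lam Y u) (.lam Y v))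
  | pairParL : RedU (.pair (.par u v) w) (.par (.pair u w) (.pair v w))
  | pairParR : RedU (.pair w (.par u v)) (.par (.pair w u) (.pair w v))
  | basicCross : ∀ (C : Ctx) (u D : TermCL),
      (∀ n, n ≤ C.depth → freeInB n u = false) →
      RedU (.parC B (C.fill (.app (.var C.depth) u)) D)
        (TermCL.subst 0 (u.rename (fun n => n - (C.depth + 1))) D)
  | simpL : freeInB 0 u = false →
      RedU (.parC B u v) (TermCL.subst 0 (.var 0) u)
  | simpR : freeInB 0 v = false →
      RedU (.parC B u v) (TermCL.subst 0 (.var 0) v)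
  | cross : ∀ (C : Ctx) (u D : TermCL) (ys : List Nat),
      ys = (List.range C.depth).filter (fun n => freeInB n u) →
      ys ≠ [] →
      freeInB C.depth u = false →
      SimpleParallel (C.fill (.app (.var C.depth) u)) →
      IntuNormal (C.fill (.app (.var C.depth) u)) →
      NoVarRight 0 C →
      RedU (.parC B (C.fill (.app (.var C.depth) u)) D)
        (.parC (tupleType (ys.map fun n => C.ext.getD n .bot))
          (.parC B
            ((C.rename (liftF Nat.succ)).fill
              (.app (.var (C.depth + 1)) (tupleTerm (ys.map TermCL.var))))
            (liftU1 D))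
          (TermCL.subst 0 (u.msubst (crossσ C.depth ys)) (liftU1 D)))
  | lam : RedU t t' → RedU (.lam A t) (.lam A t')
  | appL : RedU t t' → RedU (.app t u) (.app t' u)
  | appR : RedU u u' → RedU (.app t u) (.app t u')
  | pairL : RedU t t' → RedU (.pair t u) (.pair t' u)
  | pairR : RedU u u' → RedU (.pair t u) (.pair t u')
  | proj : RedU t t' → RedU (.proj b t) (.proj b t')
  | efq : RedU t t' → RedU (.efq A t) (.efq A t')
  | parCL : RedU u u' → RedU (.parC A u v) (.parC A u' v)
  | parCR : RedU v v' → RedU (.parC A u v) (.parC A u v')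
  | parL : RedU u u' → RedU (.par u v) (.par u' v)
  | parR : RedU v v' → RedU (.par u v) (.par u v')

/-! A cross reduction on the channel `a` of `(λy. ā y) ∥ₐ (x a)` yields
`((λy. b̄ y) ∥ₐ (x a)) ∥_b (x b)`. The inner channel `a` no longer occurs in
`λy. b̄ y`, so a simplification discards it, and in de Bruijn notation the
result is literally the starting term: the two steps form a cycle. -/

theorem exists_chain_of_cycle_two {α : Type*} {r : α → α → Prop} {a b : α}
    (hab : r a b) (hba : r b a) : ∃ f : ℕ → α, f 0 = a ∧ ∀ n, r (f n) (f (n + 1)) := by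
  refine ⟨fun n => if Even n then a else b, by simp, fun n => ?_⟩
  by_cases hn : Even n <;> simp [hn, Nat.even_add_one, hab, hba]

theorem RedU.cross_eta_channel (B : Formula) (D : TermCL) :
    RedU (.parC B (.lam B (.app (.var 1) (.var 0))) D)
      (.parC B (.parC B (.lam B (.app (.var 2) (.var 0))) (liftU1 D))
        (TermCL.subst 0 (.var 0) (liftU1 D))) := by
  have normal : IntuNormal (.lam B (.app (.var 1) (.var 0))) := by
    intro u h
    cases h with
    | lam h => cases h with
      | appL h | appR h => cases h
  exact RedU.cross (Ctx.lam B .hole) (.var 0) D [0] rfl (List.cons_ne_nil _ _) rfl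
    (.base ⟨trivial, trivial⟩) normal trivial

/-- without the communication-complexity restriction, the term
(λy^B. ā y) ∥ₐ (x a) (with x : B → ¬B the free variable 0) admits an infinite
reduction sequence. -/
theorem unrestricted_cross_nonterminating (B : Formula) :
    ∃ f : ℕ → TermCL,
      f 0 = TermCL.parC B (.lam B (.app (.var 1) (.var 0)))
        (.app (.var 1) (.var 0)) ∧
      ∀ n, RedU (f n) (f (n+1)) :=
  exists_chain_of_cycle_two (RedU.cross_eta_channel B _) (.parCL (.simpL rfl))
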